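/- Let N ≥ 5 and 2^* = 2N/(N-2). Then lim_{k→∞} k^{-(N-2)} Σ_{j=2}^{k} (1-cos(2(j-1)π/k))/(2sin((j-1)π/k))^N = B_1/2, where B_1 = (2/(2π)^{N-2}) Σ_{j=1}^∞ j^{-(N-2)}. -/

import Mathlib

open Real Finset Filter

lemma lim1 (c : ℝ) (hc : 0 < c) :
    Tendsto (fun k : ℕ => (k : ℝ) * Real.sin (c / k)) atTop (nhds c) := by
  have hslope : Tendsto (fun x : ℝ => Real.sin x / x) (nhdsWithin 0 {(0:ℝ)}ᶜ) (nhds 1) := by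
    have h := (Real.hasDerivAt_sin 0)
    rw [hasDerivAt_iff_tendsto_slope] at h
    rw [Real.cos_zero] at h
    apply h.congr'
    filter_upwards [self_mem_nhdsWithin] with x hx
    simp [slope_def_field]
  have h2 : Tendsto (fun k : ℕ => c / (k:ℝ)) atTop (nhdsWithin 0 {(0:ℝ)}ᶜ) := by
    apply tendsto_nhdsWithin_of_tendsto_nhds_of_eventually_within
    · exact tendsto_const_nhds.div_atTop tendsto_natCast_atTop_atTop
    · filter_upwards [eventually_gt_atTop 0] with k hk
      have hk' : (0:ℝ) < (k:ℝ) := by exact_mod_cast hk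
      simp only [Set.mem_compl_iff, Set.mem_singleton_iff]
      positivity
  have h3 : Tendsto (fun k : ℕ => Real.sin (c / k) / (c / k)) atTop (nhds 1) :=
    hslope.comp h2
  have h4 := h3.const_mul c
  rw [mul_one] at h4
  apply h4.congr'
  filter_upwards [eventually_gt_atTop 0] with k hk
  have hk' : (0:ℝ) < (k:ℝ) := by exact_mod_cast hk
  field_simp

lemma lim2 (c : ℝ) (hc : 0 < c) (m : ℕ) :
    Tendsto (fun k : ℕ => 1 / ((k : ℝ) * Real.sin (c / k)) ^ m) atTop (nhds (1 / c ^ m)) := by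
  have h := ((lim1 c hc).pow m).inv₀ (by positivity)
  simpa [one_div] using h

lemma half (m : ℕ) (hm : 3 ≤ m) (u : ℕ → ℕ) (hu : ∀ k, 2 * u k ≤ k)
    (hu2 : Tendsto u atTop atTop) :
    Tendsto (fun k : ℕ => ∑ i ∈ Icc 1 (u k), 1 / ((k:ℝ) * Real.sin (i * π / k)) ^ m) atTop
      (nhds (∑' j : ℕ, 1 / (((j:ℝ) + 1) * π) ^ m)) := by
  set f : ℕ → ℕ → ℝ := fun k j =>
    if j + 1 ≤ u k then 1 / ((k:ℝ) * Real.sin ((j + 1) * π / k)) ^ m else 0 with hf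
  have hbound : ∀ k j, ‖f k j‖ ≤ 1 / (2 * ((j:ℝ) + 1)) ^ m := by
    intro k j
    simp only [hf]
    split_ifs with h
    · have hk2 : 2 * (j + 1) ≤ k := le_trans (by omega) (hu k)
      have hkpos : (0:ℝ) < (k:ℝ) := by
        have : 0 < k := by omega
        exact_mod_cast this
      set x : ℝ := ((j:ℝ) + 1) * π / k with hx
      have hx0 : 0 ≤ x := by positivity
      have hxle : x ≤ π / 2 := by
        rw [hx, div_le_div_iff₀ hkpos two_pos]
        have : (2:ℝ) * ((j:ℝ) + 1) ≤ (k:ℝ) := by exact_mod_cast hk2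
        nlinarith [Real.pi_pos]
      have hsin := Real.mul_le_sin hx0 hxle
      have hks : 2 * ((j:ℝ) + 1) ≤ (k:ℝ) * Real.sin x := by
        have : (k:ℝ) * (2 / π * x) ≤ (k:ℝ) * Real.sin x :=
          mul_le_mul_of_nonneg_left hsin (le_of_lt hkpos)
        calc 2 * ((j:ℝ) + 1) = (k:ℝ) * (2 / π * (((j:ℝ) + 1) * π / k)) := by
              field_simp
          _ ≤ (k:ℝ) * Real.sin x := this
      have hpos2 : (0:ℝ) < 2 * ((j:ℝ) + 1) := by positivity
      have hkx : (0:ℝ) < (k:ℝ) * Real.sin x := lt_of_lt_of_le hpos2 hks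
      rw [Real.norm_eq_abs, abs_of_nonneg (le_of_lt (div_pos one_pos (pow_pos hkx m)))]
      apply one_div_le_one_div_of_le (by positivity)
      exact pow_le_pow_left₀ (le_of_lt hpos2) hks m
    · simp; positivity
  have hsum : Summable (fun j : ℕ => 1 / (2 * ((j:ℝ) + 1)) ^ m) := by
    have h1 : Summable (fun j : ℕ => 1 / ((j:ℝ) + 1) ^ m) := by
      have := (summable_nat_add_iff (f := fun n : ℕ => 1 / (n:ℝ) ^ m) 1).mpr
        (summable_one_div_nat_pow.mpr (by omega))
      simpa [Nat.cast_add] using this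
    have := h1.mul_left (1 / 2 ^ m)
    apply this.congr
    intro j
    rw [mul_pow]
    field_simp
  have hptwise : ∀ j : ℕ, Tendsto (fun k => f k j) atTop (nhds (1 / (((j:ℝ) + 1) * π) ^ m)) := by
    intro j
    have hc : (0:ℝ) < ((j:ℝ) + 1) * π := by positivity
    have := lim2 (((j:ℝ) + 1) * π) hc m
    apply this.congr'
    filter_upwards [hu2.eventually_ge_atTop (j + 1)] with k hk
    simp only [hf, if_pos hk]
  have key := tendsto_tsum_of_dominated_convergence hsum hptwise
    (Eventually.of_forall hbound)
  apply key.congr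
  intro k
  rw [tsum_eq_sum (s := Finset.range (u k)) (by
    intro j hj
    simp only [Finset.mem_range, not_lt] at hj
    simp only [hf]
    rw [if_neg (by omega)])]
  rw [← Finset.Ico_add_one_right_eq_Icc, Finset.sum_Ico_eq_sum_range]
  rw [Nat.add_sub_cancel]
  apply Finset.sum_congr rfl
  intro j hj
  simp only [Finset.mem_range] at hj
  simp only [hf]
  rw [if_pos (by omega)]
  push_cast
  ring_nf

/-- `k^{-(N-2)} ∑_{j=2}^k (1-cos(2(j-1)π/k))/(2 sin((j-1)π/k))^N → B₁/2`. -/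
theorem stmt_18 (N : ℕ) (hN : 5 ≤ N) :
    Filter.Tendsto
      (fun k : ℕ =>
        (∑ j ∈ Finset.Icc 2 k,
            (1 - Real.cos (2*((j:ℝ)-1)*Real.pi/k)) / (2 * Real.sin (((j:ℝ)-1)*Real.pi/k)) ^ N)
          / (k:ℝ) ^ (N-2))
      Filter.atTop
      (nhds (((2 / (2*Real.pi) ^ (N-2)) * ∑' j : ℕ, 1 / ((j:ℝ)+1) ^ (N-2)) / 2)) := by
  set m := N - 2 with hm'
  have hm : 3 ≤ m := by omega
  have hπ : (0:ℝ) < π := Real.pi_pos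
  have hT : (∑' j : ℕ, 1 / (((j:ℝ) + 1) * π) ^ m)
      = (1 / π ^ m) * ∑' j : ℕ, 1 / ((j:ℝ) + 1) ^ m := by
    rw [← tsum_mul_left]
    apply tsum_congr
    intro j
    rw [mul_pow, one_div, one_div, one_div, mul_inv]
    ring
  have hA := half m hm (fun k => k / 2) (fun k => by show 2 * (k / 2) ≤ k; omega)
      (tendsto_atTop_atTop.2 fun b => ⟨2 * b + 2, fun a ha => by omega⟩)
  have hB := half m hm (fun k => k - 1 - k / 2) (fun k => by show 2 * (k - 1 - k / 2) ≤ k; omega)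
      (tendsto_atTop_atTop.2 fun b => ⟨2 * b + 2, fun a ha => by omega⟩)
  have hAB := (hA.add hB).const_mul ((1:ℝ) / 2 ^ (N - 1))
  have hval : ((1:ℝ) / 2 ^ (N - 1)) *
        ((∑' j : ℕ, 1 / (((j:ℝ) + 1) * π) ^ m) + (∑' j : ℕ, 1 / (((j:ℝ) + 1) * π) ^ m))
      = ((2 / (2 * π) ^ m) * ∑' j : ℕ, 1 / ((j:ℝ) + 1) ^ m) / 2 := by
    rw [hT]
    have hN1 : N - 1 = m + 1 := by omega
    rw [hN1, mul_pow]
    have hπm : (π:ℝ) ^ m ≠ 0 := by positivity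
    have h2m : (2:ℝ) ^ m ≠ 0 := by positivity
    field_simp
    ring
  rw [hval] at hAB
  apply Filter.Tendsto.congr' _ hAB
  filter_upwards [eventually_ge_atTop 2] with k hk
  have hk0 : (0:ℝ) < (k:ℝ) := by
    have : 0 < k := by omega
    exact_mod_cast this
  -- reflection
  have hrefl : ∑ i ∈ Icc 1 (k - 1 - k / 2), 1 / ((k:ℝ) * Real.sin (i * π / k)) ^ m
      = ∑ i ∈ Ioc (k/2) (k-1), 1 / ((k:ℝ) * Real.sin (i * π / k)) ^ m := by
    apply Finset.sum_nbij' (fun i => k - i) (fun i => k - i)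
    · intro a ha; simp only [Finset.mem_Icc, Finset.mem_Ioc] at *; omega
    · intro a ha; simp only [Finset.mem_Icc, Finset.mem_Ioc] at *; omega
    · intro a ha; simp only [Finset.mem_Icc] at ha; omega
    · intro a ha; simp only [Finset.mem_Ioc] at ha; omega
    · intro a ha
      simp only [Finset.mem_Icc] at ha
      have hak : a ≤ k := by omega
      have hcast : ((k - a : ℕ):ℝ) = (k:ℝ) - a := by
        push_cast [hak]; ring
      rw [hcast]
      have harg : ((k:ℝ) - a) * π / k = π - (a:ℝ) * π / k := by
        field_simp
      rw [harg, Real.sin_pi_sub]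
  have hsum1 : (∑ i ∈ Icc 1 (k/2), 1 / ((k:ℝ) * Real.sin (i * π / k)) ^ m)
        + ∑ i ∈ Icc 1 (k - 1 - k / 2), 1 / ((k:ℝ) * Real.sin (i * π / k)) ^ m
      = ∑ i ∈ Icc 1 (k-1), 1 / ((k:ℝ) * Real.sin (i * π / k)) ^ m := by
    rw [hrefl]
    rw [show Icc 1 (k/2) = Ioc 0 (k/2) from by ext x; simp; omega,
        show Icc 1 (k-1) = Ioc 0 (k-1) from by ext x; simp; omega]
    exact Finset.sum_Ioc_consecutive _ (Nat.zero_le _) (by omega)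
  -- main identity
  have hstar : (∑ j ∈ Finset.Icc 2 k,
        (1 - Real.cos (2*((j:ℝ)-1)*π/k)) / (2 * Real.sin (((j:ℝ)-1)*π/k)) ^ N) / (k:ℝ) ^ m
      = ∑ i ∈ Icc 1 (k-1), (1 / (2:ℝ) ^ (N-1)) * (1 / ((k:ℝ) * Real.sin (i * π / k)) ^ m) := by
    rw [Finset.sum_div]
    rw [show Finset.Icc 2 k = Finset.Ico 2 (k+1) from (Finset.Ico_add_one_right_eq_Icc 2 k).symm,
        Finset.sum_Ico_eq_sum_range,
        show Finset.Icc 1 (k-1) = Finset.Ico 1 k from by ext x; simp; omega,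
        Finset.sum_Ico_eq_sum_range,
        show k + 1 - 2 = k - 1 from by omega]
    apply Finset.sum_congr rfl
    intro r hr
    simp only [Finset.mem_range] at hr
    set θ : ℝ := ((r:ℝ) + 1) * π / k with hθ
    have e3 : 2*(((2+r:ℕ):ℝ)-1)*π/(k:ℝ) = 2*θ := by push_cast; ring
    have e1 : (((2+r:ℕ):ℝ)-1)*π/(k:ℝ) = θ := by push_cast; ring
    have e2 : ((1+r:ℕ):ℝ)*π/(k:ℝ) = θ := by push_cast; ring
    rw [e3, e1, e2]
    have hθpos : 0 < θ := by positivity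
    have hθlt : θ < π := by
      rw [hθ, div_lt_iff₀ hk0]
      have hrk : (r:ℝ) + 1 < (k:ℝ) := by exact_mod_cast (by omega : r + 1 < k)
      nlinarith
    have hs : 0 < Real.sin θ := Real.sin_pos_of_pos_of_lt_pi hθpos hθlt
    have hc2 : 1 - Real.cos (2*θ) = 2 * Real.sin θ ^ 2 := by
      rw [Real.cos_two_mul']
      have := Real.sin_sq_add_cos_sq θ
      linarith
    rw [hc2]
    have hNe : N = m + 2 := by omega
    rw [hNe, show m + 2 - 1 = m + 1 from rfl]
    have hs' : Real.sin θ ≠ 0 := ne_of_gt hs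
    have hk' : (k:ℝ) ≠ 0 := ne_of_gt hk0
    field_simp
    ring
  show (1:ℝ) / 2 ^ (N-1) * _ = _
  rw [hsum1, hstar, Finset.mul_sum]
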